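/- arXiv:2502.18967 — 6 statements merged into one kernel-verified Lean document; each statement's English description precedes it below -/
import Mathlib

section
/- Let Γ be a lattice in a finite-dimensional real inner product space V that admits an orthogonal basis b₁,…,b_r (i.e. Γ = ℤ-span of pairwise orthogonal vectors). Then any two orthogonal bases of Γ agree up to permutation and sign changes of the basis vectors. -/
/-!
Write `c j = ∑ i, M i • b i` and `b i = ∑ k, N i k • c k` with integer coefficients. Orthogonality
gives `M i * ‖b i‖² = ⟪b i, c j⟫ = N i j * ‖c j‖²`, so the integers `M i * N i j` are nonnegative,
vanish only when `M i = 0`, and expanding `‖c j‖² = ⟪c j, ∑ i, M i • b i⟫` shows that they sum to `1`.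
Hence `c j = ± b i` for a single `i`, and `j ↦ i` is injective because distinct `c j` are orthogonal.
-/

open Finset
open scoped RealInnerProductSpace

lemma Int.exists_eq_one_of_sum_eq_one {ι : Type*} [Fintype ι] {f : ι → ℤ} (hf : ∀ i, 0 ≤ f i)
    (hsum : ∑ i, f i = 1) : ∃ i₀, f i₀ = 1 ∧ ∀ i ≠ i₀, f i = 0 := by
  classical
  obtain ⟨i₀, -, hi₀⟩ := exists_ne_zero_of_sum_ne_zero (hsum ▸ one_ne_zero)
  have hrest : ∑ i ∈ univ.erase i₀, f i = 1 - f i₀ := by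
    rw [← hsum, ← add_sum_erase _ _ (mem_univ i₀)]
    ring
  have hrest_nonneg : 0 ≤ ∑ i ∈ univ.erase i₀, f i := sum_nonneg fun i _ => hf i
  have hf₀ := hf i₀
  refine ⟨i₀, by omega, fun i hi => ?_⟩
  exact (sum_eq_zero_iff_of_nonneg fun i _ => hf i).mp (by omega) i (mem_erase.mpr ⟨hi, mem_univ i⟩)

section

variable {V : Type*} [NormedAddCommGroup V] [InnerProductSpace ℝ V] {ι κ : Type*} [Fintype ι]
  [Fintype κ]

lemma inner_sum_zsmul_of_pairwise_orthogonal {b : ι → V}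
    (hb : Pairwise fun i j => ⟪b i, b j⟫ = 0) (f : ι → ℤ) (i : ι) :
    ⟪b i, ∑ k, f k • b k⟫ = f i * ‖b i‖ ^ 2 := by
  rw [inner_sum, sum_eq_single i]
  · rw [← Int.cast_smul_eq_zsmul ℝ, real_inner_smul_right, real_inner_self_eq_norm_sq]
  · intro k _ hk
    rw [← Int.cast_smul_eq_zsmul ℝ, real_inner_smul_right, hb hk.symm, mul_zero]
  · simp

theorem exists_sign_smul_eq_of_span_eq {b : ι → V} {c : κ → V} (hb0 : ∀ i, b i ≠ 0)
    (hbo : Pairwise fun i j => ⟪b i, b j⟫ = 0) (hco : Pairwise fun i j => ⟪c i, c j⟫ = 0)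
    (hspan : Submodule.span ℤ (Set.range b) = Submodule.span ℤ (Set.range c)) {j : κ}
    (hcj : c j ≠ 0) : ∃ i, ∃ ε : ℝ, (ε = 1 ∨ ε = -1) ∧ c j = ε • b i := by
  obtain ⟨M, hM⟩ := (Submodule.mem_span_range_iff_exists_fun ℤ).mp
    (hspan ▸ Submodule.subset_span ⟨j, rfl⟩ : c j ∈ Submodule.span ℤ (Set.range b))
  choose N hN using fun i => (Submodule.mem_span_range_iff_exists_fun ℤ).mp
    (hspan ▸ Submodule.subset_span ⟨i, rfl⟩ : b i ∈ Submodule.span ℤ (Set.range c))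
  have hcb : ∀ i, ⟪c j, b i⟫ = N i j * ‖c j‖ ^ 2 := fun i => by
    rw [← hN i, inner_sum_zsmul_of_pairwise_orthogonal hco]
  have hMN : ∀ i, ((M i * N i j : ℤ) : ℝ) * ‖c j‖ ^ 2 = M i ^ 2 * ‖b i‖ ^ 2 := fun i => by
    rw [Int.cast_mul, mul_assoc, ← hcb, real_inner_comm, ← hM,
      inner_sum_zsmul_of_pairwise_orthogonal hbo]
    ring
  have hcj_pos : 0 < ‖c j‖ ^ 2 := by positivity
  have hprod_nonneg : ∀ i, 0 ≤ M i * N i j := fun i => by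
    have : (0 : ℝ) ≤ (M i * N i j : ℤ) := by
      rw [← mul_nonneg_iff_of_pos_right hcj_pos, hMN]
      positivity
    exact_mod_cast this
  have hM_eq_zero : ∀ i, M i * N i j = 0 → M i = 0 := fun i h => by
    have := hMN i
    rw [h, Int.cast_zero, zero_mul, eq_comm, mul_eq_zero] at this
    simpa [hb0 i] using this
  have hsum : ∑ i, M i * N i j = 1 := by
    have : ((∑ i, M i * N i j : ℤ) : ℝ) * ‖c j‖ ^ 2 = 1 * ‖c j‖ ^ 2 :=
      calc ((∑ i, M i * N i j : ℤ) : ℝ) * ‖c j‖ ^ 2 = ∑ i, (M i : ℝ) * ⟪c j, b i⟫ := by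
            simp only [Int.cast_sum, Int.cast_mul, sum_mul, hcb, mul_assoc]
        _ = ⟪c j, ∑ i, M i • b i⟫ := by
            simp only [inner_sum, ← Int.cast_smul_eq_zsmul ℝ, real_inner_smul_right]
        _ = 1 * ‖c j‖ ^ 2 := by rw [hM, real_inner_self_eq_norm_sq, one_mul]
    exact_mod_cast mul_right_cancel₀ hcj_pos.ne' this
  obtain ⟨i₀, hi₀, hrest⟩ := Int.exists_eq_one_of_sum_eq_one hprod_nonneg hsum
  refine ⟨i₀, M i₀, ?_, ?_⟩
  · rcases Int.eq_one_or_neg_one_of_mul_eq_one hi₀ with h | h <;> simp [h]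
  · rw [← hM, sum_eq_single_of_mem i₀ (mem_univ _) fun i _ hi => by
      rw [hM_eq_zero i (hrest i hi), zero_smul]]
    exact (Int.cast_smul_eq_zsmul ℝ _ _).symm

end

theorem orthogonal_lattice_basis_unique_general
    {V : Type*} [NormedAddCommGroup V] [InnerProductSpace ℝ V]
    {r : ℕ} (b c : Fin r → V)
    (hb0 : ∀ j, b j ≠ 0) (hbo : ∀ i j, i ≠ j → (inner ℝ (b i) (b j) : ℝ) = 0)
    (hc0 : ∀ j, c j ≠ 0) (hco : ∀ i j, i ≠ j → (inner ℝ (c i) (c j) : ℝ) = 0)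
    (hspan : Submodule.span ℤ (Set.range b) = Submodule.span ℤ (Set.range c)) :
    ∃ (σ : Equiv.Perm (Fin r)) (ε : Fin r → ℝ),
      (∀ j, ε j = 1 ∨ ε j = -1) ∧ ∀ j, c j = ε j • b (σ j) := by
  choose σ ε hε hcε using fun j =>
    exists_sign_smul_eq_of_span_eq hb0 (fun i j => hbo i j) (fun i j => hco i j) hspan (hc0 j)
  have hσ : Function.Injective σ := by
    intro j j' hjj'
    by_contra hne
    have hinner := hco j j' hne
    rw [hcε j, hcε j', hjj', real_inner_smul_left, real_inner_smul_right] at hinner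
    rcases hε j with h | h <;> rcases hε j' with h' | h' <;> simp [h, h', hb0] at hinner
  exact ⟨Equiv.ofBijective σ (Finite.injective_iff_bijective.mp hσ), ε, hε, hcε⟩

/-- Uniqueness of an orthogonal basis of a lattice up to permutation and signs. -/
theorem orthogonal_lattice_basis_unique
    {V : Type*} [NormedAddCommGroup V] [InnerProductSpace ℝ V] [FiniteDimensional ℝ V]
    {r : ℕ} (b c : Fin r → V)
    (hb0 : ∀ j, b j ≠ 0) (hbo : ∀ i j, i ≠ j → (inner ℝ (b i) (b j) : ℝ) = 0)
    (hc0 : ∀ j, c j ≠ 0) (hco : ∀ i j, i ≠ j → (inner ℝ (c i) (c j) : ℝ) = 0)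
    (hspan : Submodule.span ℤ (Set.range b) = Submodule.span ℤ (Set.range c)) :
    ∃ (σ : Equiv.Perm (Fin r)) (ε : Fin r → ℝ),
      (∀ j, ε j = 1 ∨ ε j = -1) ∧ ∀ j, c j = ε j • b (σ j) :=
  orthogonal_lattice_basis_unique_general b c hb0 hbo hc0 hco hspan
end

section
/- Let f be a linear isometry of a finite-dimensional real inner product space V preserving a lattice Γ with orthogonal basis b₁,…,b_r. Then f permutes the set of lines {ℝb₁,…,ℝb_r}, i.e. there is a permutation σ and signs ε_j ∈ {±1} with f(b_j) = ε_j b_{σ(j)}. -/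
/-!
Write `Γ` for the `ℤ`-span of `b`. Call `v` orthogonally indecomposable in `Γ` if no
`x ∈ Γ` other than `0` and `v` satisfies `x ⊥ v - x`. Each `b k` has this property: writing
`x = a • b k + q` with `a ∈ ℤ` and `q ⊥ b k` gives `⟪x, b k - x⟫ = a (1 - a) ‖b k‖² - ‖q‖²`,
and `a (1 - a) ≤ 0` for an integer `a`. Conversely, a nonzero indecomposable vector of `Γ` is
an integer multiple of a single `b k`: split off its component along some `b k` it is not
orthogonal to. The notion depends only on `Γ` and the inner product, so two orthogonal bases
of `Γ`, here `b` and `f ∘ b`, consist of integer multiples of each other, and the multipliers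
must be `±1`.
-/

open Submodule Set RealInnerProductSpace

theorem Submodule.span_range_comp_eq_of_forall_mem_iff {R M ι : Type*} [Semiring R]
    [AddCommMonoid M] [Module R M] (e : M ≃ₗ[R] M) (b : ι → M)
    (he : ∀ v, v ∈ span R (range b) ↔ e v ∈ span R (range b)) :
    span R (range (e ∘ b)) = span R (range b) := by
  rw [range_comp, ← LinearEquiv.coe_coe, span_image]
  refine le_antisymm (map_le_iff_le_comap.mpr fun v hv => (he v).mp hv) fun v hv => ?_
  exact ⟨e.symm v, (he _).mpr (by simpa using hv), e.apply_symm_apply v⟩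

section OrthogonalFamily

variable {V : Type*} [NormedAddCommGroup V] [InnerProductSpace ℝ V]

def IsOrthIndecomposable (L : Submodule ℤ V) (v : V) : Prop :=
  ∀ x ∈ L, ⟪x, v - x⟫ = 0 → x = 0 ∨ x = v

variable {ι : Type*} {b : ι → V}

theorem exists_intCast_smul_add_of_mem_span (hb : Pairwise fun i j => ⟪b i, b j⟫ = 0)
    {v : V} (hv : v ∈ span ℤ (range b)) (k : ι) :
    ∃ a : ℤ, ∃ q ∈ span ℤ (range b), ⟪b k, q⟫ = 0 ∧ v = (a : ℝ) • b k + q := by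
  induction hv using span_induction with
  | mem _ h =>
    obtain ⟨i, rfl⟩ := h
    by_cases hik : i = k
    · exact ⟨1, 0, zero_mem _, inner_zero_right _, by simp [hik]⟩
    · exact ⟨0, b i, subset_span (mem_range_self i), hb (Ne.symm hik), by simp⟩
  | zero => exact ⟨0, 0, zero_mem _, inner_zero_right _, by simp⟩
  | add _ _ _ _ hx hy =>
    obtain ⟨a, q, hq, hkq, rfl⟩ := hx
    obtain ⟨a', q', hq', hkq', rfl⟩ := hy
    refine ⟨a + a', q + q', add_mem hq hq', by rw [inner_add_right, hkq, hkq', add_zero], ?_⟩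
    push_cast
    rw [add_smul]
    abel
  | smul n _ _ hx =>
    obtain ⟨a, q, hq, hkq, rfl⟩ := hx
    refine ⟨n * a, n • q, smul_mem _ n hq, ?_, ?_⟩
    · rw [← Int.cast_smul_eq_zsmul ℝ, real_inner_smul_right, hkq, mul_zero]
    · rw [smul_add, ← Int.cast_smul_eq_zsmul ℝ n ((a : ℝ) • b k), smul_smul]
      push_cast
      rfl

theorem exists_inner_ne_zero_of_mem_span {v : V} (hv : v ∈ span ℤ (range b)) (hv0 : v ≠ 0) :
    ∃ k, ⟪b k, v⟫ ≠ 0 := by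
  by_contra! h
  have hperp : ∀ w ∈ span ℤ (range b), ⟪w, v⟫ = 0 := by
    intro w hw
    induction hw using span_induction with
    | mem _ hw => obtain ⟨k, rfl⟩ := hw; exact h k
    | zero => exact inner_zero_left _
    | add _ _ _ _ hx hy => rw [inner_add_left, hx, hy, add_zero]
    | smul n _ _ hx => rw [← Int.cast_smul_eq_zsmul ℝ, real_inner_smul_left, hx, mul_zero]
  exact hv0 (inner_self_eq_zero.mp (hperp v hv))

theorem isOrthIndecomposable_apply_span (hb : Pairwise fun i j => ⟪b i, b j⟫ = 0) (k : ι) :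
    IsOrthIndecomposable (span ℤ (range b)) (b k) := by
  intro x hx hxk
  obtain ⟨a, q, -, hkq, rfl⟩ := exists_intCast_smul_add_of_mem_span hb hx k
  have hqk : ⟪q, b k⟫ = 0 := by rw [real_inner_comm, hkq]
  have hsplit : ((a : ℝ) * (1 - a)) * ⟪b k, b k⟫ - ⟪q, q⟫ = 0 := by
    rw [← hxk, show b k - ((a : ℝ) • b k + q) = (1 - (a : ℝ)) • b k - q by
      rw [sub_smul, one_smul]; abel]
    simp only [inner_add_left, inner_sub_right, real_inner_smul_left, real_inner_smul_right,
      hkq, hqk]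
    ring
  have ha : (a : ℝ) * (1 - a) ≤ 0 := by
    have : a * (1 - a) ≤ 0 := by rcases le_or_gt a 0 with h | h <;> nlinarith
    exact_mod_cast this
  have hbb := real_inner_self_nonneg (x := b k)
  have hqq := real_inner_self_nonneg (x := q)
  have hq : q = 0 :=
    inner_self_eq_zero.mp (le_antisymm (by linarith [mul_nonpos_of_nonpos_of_nonneg ha hbb]) hqq)
  have hab : (a : ℝ) * (1 - a) * ⟪b k, b k⟫ = 0 := by rw [← hsplit, hq, inner_zero_left, sub_zero]
  subst hq
  rcases mul_eq_zero.mp hab with ha | hbk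
  · rcases mul_eq_zero.mp ha with ha | ha
    · left; simp [ha]
    · right; simp [sub_eq_zero.mp ha |>.symm]
  · left; simp [inner_self_eq_zero.mp hbk]

theorem IsOrthIndecomposable.exists_eq_intCast_smul (hb : Pairwise fun i j => ⟪b i, b j⟫ = 0)
    {v : V} (hvi : IsOrthIndecomposable (span ℤ (range b)) v) (hv : v ∈ span ℤ (range b))
    (hv0 : v ≠ 0) : ∃ k, ∃ a : ℤ, v = (a : ℝ) • b k := by
  obtain ⟨k, hk⟩ := exists_inner_ne_zero_of_mem_span hv hv0
  obtain ⟨a, q, -, hkq, rfl⟩ := exists_intCast_smul_add_of_mem_span hb hv k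
  have hmem : (a : ℝ) • b k ∈ span ℤ (range b) := by
    rw [Int.cast_smul_eq_zsmul]
    exact zsmul_mem (subset_span (mem_range_self k)) a
  have horth : ⟪(a : ℝ) • b k, (a : ℝ) • b k + q - (a : ℝ) • b k⟫ = 0 := by
    rw [add_sub_cancel_left, real_inner_smul_left, hkq, mul_zero]
  rcases hvi _ hmem horth with h0 | h
  · rw [h0, zero_add] at hk
    exact absurd hkq hk
  · exact ⟨k, a, h.symm⟩

theorem exists_eq_sign_smul_of_span_eq {κ : Type*} {c : κ → V} (hb0 : ∀ i, b i ≠ 0)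
    (hb : Pairwise fun i j => ⟪b i, b j⟫ = 0) (hc0 : ∀ j, c j ≠ 0)
    (hc : Pairwise fun i j => ⟪c i, c j⟫ = 0) (hspan : span ℤ (range c) = span ℤ (range b))
    (j : κ) : ∃ i, ∃ ε : ℝ, (ε = 1 ∨ ε = -1) ∧ c j = ε • b i := by
  have hcj : c j ∈ span ℤ (range b) := hspan ▸ subset_span (mem_range_self j)
  obtain ⟨i, a, hi⟩ :=
    (hspan ▸ isOrthIndecomposable_apply_span hc j).exists_eq_intCast_smul hb hcj (hc0 j)
  have hbi : b i ∈ span ℤ (range c) := hspan ▸ subset_span (mem_range_self i)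
  obtain ⟨l, a', hl⟩ :=
    (hspan.symm ▸ isOrthIndecomposable_apply_span hb i).exists_eq_intCast_smul hc hbi (hb0 i)
  have hjl : c j = ((a * a' : ℤ) : ℝ) • c l := by rw [hi, hl, smul_smul]; push_cast; rfl
  obtain rfl : j = l := by
    by_contra hne
    have := congrArg (⟪·, c j⟫) hjl
    simp only [real_inner_smul_left, hc (Ne.symm hne), mul_zero] at this
    exact hc0 j (inner_self_eq_zero.mp this)
  have hunit : a * a' = 1 := by
    have := smul_left_injective ℝ (hc0 j) (hjl.symm.trans (one_smul ℝ (c j)).symm)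
    exact_mod_cast this
  refine ⟨i, a, ?_, hi⟩
  rcases Int.eq_one_or_neg_one_of_mul_eq_one hunit with rfl | rfl <;> simp

end OrthogonalFamily

theorem isometry_preserving_rectangular_lattice_permutes_basis_general
    {V : Type*} [NormedAddCommGroup V] [InnerProductSpace ℝ V]
    {r : ℕ} (b : Fin r → V)
    (hb0 : ∀ j, b j ≠ 0) (hbo : ∀ i j, i ≠ j → (inner ℝ (b i) (b j) : ℝ) = 0)
    (f : V ≃ₗᵢ[ℝ] V)
    (hf : ∀ v, v ∈ Submodule.span ℤ (Set.range b) ↔ f v ∈ Submodule.span ℤ (Set.range b)) :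
    ∃ (σ : Equiv.Perm (Fin r)) (ε : Fin r → ℝ),
      (∀ j, ε j = 1 ∨ ε j = -1) ∧ ∀ j, f (b j) = ε j • b (σ j) := by
  have hb : Pairwise fun i j => ⟪b i, b j⟫ = 0 := fun i j => hbo i j
  have hspan : span ℤ (range (f ∘ b)) = span ℤ (range b) :=
    span_range_comp_eq_of_forall_mem_iff (f.toLinearEquiv.restrictScalars ℤ) b hf
  choose σ ε hε hσ using exists_eq_sign_smul_of_span_eq hb0 hb (c := f ∘ b)
    (fun j => by simpa using hb0 j) (fun _ _ hij => by simpa using hb hij) hspan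
  simp only [Function.comp_apply] at hσ
  have hσinj : Function.Injective σ := by
    intro i j hij
    by_contra hne
    have : ⟪b i, b j⟫ = 0 := hb hne
    rw [← f.inner_map_map, hσ i, hσ j, hij, real_inner_smul_left, real_inner_smul_right] at this
    rcases hε i with h | h <;> rcases hε j with h' | h' <;>
      simp [h, h', hb0] at this
  exact ⟨Equiv.ofBijective σ (Finite.injective_iff_bijective.mp hσinj), ε, hε, hσ⟩

/-- A linear isometry preserving a lattice with orthogonal basis permutes the basis
vectors up to sign. -/
theorem isometry_preserving_rectangular_lattice_permutes_basis
    {V : Type*} [NormedAddCommGroup V] [InnerProductSpace ℝ V] [FiniteDimensional ℝ V]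
    {r : ℕ} (b : Fin r → V)
    (hb0 : ∀ j, b j ≠ 0) (hbo : ∀ i j, i ≠ j → (inner ℝ (b i) (b j) : ℝ) = 0)
    (f : V ≃ₗᵢ[ℝ] V)
    (hf : ∀ v, v ∈ Submodule.span ℤ (Set.range b) ↔ f v ∈ Submodule.span ℤ (Set.range b)) :
    ∃ (σ : Equiv.Perm (Fin r)) (ε : Fin r → ℝ),
      (∀ j, ε j = 1 ∨ ε j = -1) ∧ ∀ j, f (b j) = ε j • b (σ j) :=
  isometry_preserving_rectangular_lattice_permutes_basis_general b hb0 hbo f hf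
end

section
/- Let 𝔤 be a real Lie algebra with an invariant inner product (⟨[x,y],z⟩ = -⟨y,[x,z]⟩), and let X_j, Y_j (j = 1,…,r) be elements such that all X_j lie in an abelian subspace 𝔞, all Y_j lie in an abelian subspace 𝔟, and setting H_j := [X_j, Y_j], suppose [X_j, H_j] = -Y_j and [Y_j, H_j] = X_j for each j, and suppose ⟨H_j, H_k⟩ = 0 for j ≠ k and [X_j, [X_k, ξ]] = [X_k, [X_j, ξ]] where Y_j = [X_j, ξ] for a fixed ξ. Then ‖[X_j, Y_k]‖² = ⟨H_j, H_k⟩ = 0 for j ≠ k, so [X_j, Y_k] = 0 for j ≠ k. -/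
/-!
Since `Y k = ⁅X k, ξ⁆` and the `⁅X j, ⁅X k, ξ⁆⁆` are symmetric in `j, k`, we have
`⁅X j, Y k⁆ = ⁅X k, Y j⁆`. Invariance of the inner product and the Jacobi identity for the
commuting pair `X j`, `X k` then give
`‖⁅X j, Y k⁆‖² = ⟪⁅X j, Y k⁆, ⁅X k, Y j⁆⟫ = ⟪⁅X k, Y k⁆, ⁅X j, Y j⁆⟫ = ⟪H k, H j⟫ = 0`.
-/

section InvariantInner

variable {L : Type*} [NormedAddCommGroup L] [InnerProductSpace ℝ L] [LieRing L]

/- `L` carries two unrelated additive structures; `0` below is the zero of the Lie ring, which an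
invariant inner product forces to agree with the zero of the normed group. -/
theorem eq_zero_of_inner_self_eq_zero_of_invariant
    (hinv : ∀ x y z : L, inner ℝ ⁅x, y⁆ z = - inner ℝ y ⁅x, z⁆) {x : L}
    (hx : inner ℝ x x = (0 : ℝ)) : x = 0 := by
  have hzero : inner ℝ (0 : L) (0 : L) = (0 : ℝ) := by
    have h := hinv 0 0 0
    rw [lie_self] at h
    linarith
  exact (inner_self_eq_zero.mp hx).trans (inner_self_eq_zero.mp hzero).symm

theorem inner_lie_lie_comm_of_lie_eq_zero
    (hinv : ∀ x y z : L, inner ℝ ⁅x, y⁆ z = - inner ℝ y ⁅x, z⁆) {a b : L} (hab : ⁅a, b⁆ = 0)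
    (y z : L) : inner ℝ ⁅a, y⁆ ⁅b, z⁆ = (inner ℝ ⁅b, y⁆ ⁅a, z⁆ : ℝ) := by
  have hjacobi : ⁅a, ⁅b, z⁆⁆ = ⁅b, ⁅a, z⁆⁆ := by
    rw [leibniz_lie, hab, zero_lie, zero_add]
  calc inner ℝ ⁅a, y⁆ ⁅b, z⁆ = - inner ℝ y ⁅a, ⁅b, z⁆⁆ := hinv a y _
    _ = - inner ℝ y ⁅b, ⁅a, z⁆⁆ := by rw [hjacobi]
    _ = inner ℝ ⁅b, y⁆ ⁅a, z⁆ := (hinv b y _).symm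

end InvariantInner

theorem bracket_X_Y_eq_zero_of_ne_general
    {L : Type*} [NormedAddCommGroup L] [InnerProductSpace ℝ L]
    [LieRing L]
    (hinv : ∀ x y z : L, (inner ℝ ⁅x, y⁆ z : ℝ) = - inner ℝ y ⁅x, z⁆)
    {r : ℕ} (ξ : L) (X Y H : Fin r → L)
    (hY : ∀ j, Y j = ⁅X j, ξ⁆)
    (hH : ∀ j, H j = ⁅X j, Y j⁆)
    (hXab : ∀ j k, ⁅X j, X k⁆ = 0)
    (hHorth : ∀ j k, j ≠ k → (inner ℝ (H j) (H k) : ℝ) = 0)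
    (hsymm : ∀ j k, ⁅X j, ⁅X k, ξ⁆⁆ = ⁅X k, ⁅X j, ξ⁆⁆) :
    ∀ j k, j ≠ k → ⁅X j, Y k⁆ = 0 := by
  intro j k hjk
  have hswap : ⁅X j, Y k⁆ = ⁅X k, Y j⁆ := by rw [hY j, hY k, hsymm]
  apply eq_zero_of_inner_self_eq_zero_of_invariant hinv
  calc inner ℝ ⁅X j, Y k⁆ ⁅X j, Y k⁆ = inner ℝ ⁅X j, Y k⁆ ⁅X k, Y j⁆ := by rw [← hswap]
    _ = inner ℝ (H k) (H j) := by
      rw [inner_lie_lie_comm_of_lie_eq_zero hinv (hXab j k), hH, hH]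
    _ = 0 := hHorth k j hjk.symm

/-- The commutation computation for the strongly orthogonal `𝔰𝔬(3)`-triples:
under the stated relations, `⁅X j, Y k⁆ = 0` for `j ≠ k`. -/
theorem bracket_X_Y_eq_zero_of_ne
    {L : Type*} [NormedAddCommGroup L] [InnerProductSpace ℝ L]
    [LieRing L] [LieAlgebra ℝ L]
    (hinv : ∀ x y z : L, (inner ℝ ⁅x, y⁆ z : ℝ) = - inner ℝ y ⁅x, z⁆)
    {r : ℕ} (ξ : L) (X Y H : Fin r → L)
    (hY : ∀ j, Y j = ⁅X j, ξ⁆)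
    (hH : ∀ j, H j = ⁅X j, Y j⁆)
    (hXab : ∀ j k, ⁅X j, X k⁆ = 0)
    (hYab : ∀ j k, ⁅Y j, Y k⁆ = 0)
    (hXH : ∀ j, ⁅X j, H j⁆ = - Y j)
    (hYH : ∀ j, ⁅Y j, H j⁆ = X j)
    (hHorth : ∀ j k, j ≠ k → (inner ℝ (H j) (H k) : ℝ) = 0)
    (hsymm : ∀ j k, ⁅X j, ⁅X k, ξ⁆⁆ = ⁅X k, ⁅X j, ξ⁆⁆) :
    ∀ j k, j ≠ k → ⁅X j, Y k⁆ = 0 :=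
  bracket_X_Y_eq_zero_of_ne_general hinv ξ X Y H hY hH hXab hHorth hsymm
end

section
/- Let 𝔤 = 𝔨 ⊕ 𝔭 be the decomposition of a Lie algebra under an involutive automorphism σ (𝔨 the (+1)- and 𝔭 the (-1)-eigenspace), and let τ be another involutive automorphism commuting with σ, with 𝔭₊ = 𝔭 ∩ Fix(τ) and 𝔭₋ = 𝔭 ∩ Fix(-τ). Let 𝔞₊ ⊆ 𝔭₊ be maximal abelian in 𝔭₊ and 𝔞 ⊆ 𝔭 maximal abelian in 𝔭 with 𝔞₊ ⊆ 𝔞. Then 𝔞 = 𝔞₊ ⊕ (𝔞 ∩ 𝔭₋); in particular 𝔞 is τ-invariant. -/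
/-!
Split `ζ ∈ 𝔞` into its `τ`-components `ζ± = (ζ ± τ ζ) / 2`. Because `σ` commutes with `τ`, both
components stay in `𝔭`, so `ζ₊ ∈ 𝔭₊` and `ζ₋ ∈ 𝔭₋`. For `H ∈ 𝔞₊` the Lie automorphism `τ` fixes `H`,
so `⁅τ ζ, H⁆ = τ ⁅ζ, H⁆ = 0`; thus `ζ₊` centralises `𝔞₊` and lies in `𝔞₊` by maximality. Then
`ζ₋ = ζ - ζ₊ ∈ 𝔞`, which gives the splitting, and `τ ζ = ζ₊ - ζ₋ ∈ 𝔞`.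
-/

section AbelianSubspace

variable {R L : Type*} [CommRing R] [LieRing L] [LieAlgebra R L]

def IsAbelianSubspace (S : Submodule R L) : Prop :=
  ∀ x ∈ S, ∀ y ∈ S, ⁅x, y⁆ = 0

theorem IsAbelianSubspace.sup_span_singleton {S : Submodule R L} (hS : IsAbelianSubspace S)
    {z : L} (hz : ∀ y ∈ S, ⁅z, y⁆ = 0) : IsAbelianSubspace (S ⊔ Submodule.span R {z}) := by
  rintro _ hx _ hy
  obtain ⟨s, hs, _, hu, rfl⟩ := Submodule.mem_sup.mp hx
  obtain ⟨t, ht, _, hv, rfl⟩ := Submodule.mem_sup.mp hy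
  obtain ⟨c, rfl⟩ := Submodule.mem_span_singleton.mp hu
  obtain ⟨d, rfl⟩ := Submodule.mem_span_singleton.mp hv
  have hsz : ⁅s, z⁆ = 0 := by rw [← lie_skew, hz s hs, neg_zero]
  simp [hS s hs t ht, hz t ht, hsz]

theorem IsAbelianSubspace.mem_of_maximal {S P : Submodule R L} (hS : IsAbelianSubspace S)
    (hSP : S ≤ P) (hmax : ∀ B : Submodule R L, B ≤ P → IsAbelianSubspace B → S ≤ B → B = S)
    {z : L} (hzP : z ∈ P) (hz : ∀ y ∈ S, ⁅z, y⁆ = 0) : z ∈ S := by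
  have hzP' : Submodule.span R {z} ≤ P := (Submodule.span_singleton_le_iff_mem _ _).mpr hzP
  rw [← hmax _ (sup_le hSP hzP') (hS.sup_span_singleton hz) le_sup_left]
  exact Submodule.mem_sup_right (Submodule.mem_span_singleton_self z)

end AbelianSubspace

namespace Module.End

variable {K V : Type*} [Field K] [AddCommGroup V] [Module K V]

def evenPart (f : Module.End K V) : Module.End K V := (2⁻¹ : K) • (1 + f)

def oddPart (f : Module.End K V) : Module.End K V := (2⁻¹ : K) • (1 - f)

variable (f : Module.End K V) (x : V)

@[simp]
theorem evenPart_apply : evenPart f x = (2⁻¹ : K) • (x + f x) := rfl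

@[simp]
theorem oddPart_apply : oddPart f x = (2⁻¹ : K) • (x - f x) := rfl

theorem evenPart_add_oddPart [NeZero (2 : K)] : evenPart f x + oddPart f x = x := by
  rw [evenPart_apply, oddPart_apply, ← smul_add, add_add_sub_cancel, ← two_smul K, smul_smul,
    inv_mul_cancel₀ two_ne_zero, one_smul]

theorem evenPart_sub_oddPart [NeZero (2 : K)] : evenPart f x - oddPart f x = f x := by
  rw [evenPart_apply, oddPart_apply, ← smul_sub, add_sub_sub_cancel, ← two_smul K, smul_smul,
    inv_mul_cancel₀ two_ne_zero, one_smul]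

variable {f}

theorem apply_evenPart (hf : ∀ y, f (f y) = y) : f (evenPart f x) = evenPart f x := by
  simp [hf, add_comm]

theorem apply_oddPart (hf : ∀ y, f (f y) = y) : f (oddPart f x) = -oddPart f x := by
  simp [hf, ← smul_neg]

theorem apply_evenPart_of_commute {g : Module.End K V} (hgf : ∀ y, g (f y) = f (g y)) :
    g (evenPart f x) = evenPart f (g x) := by
  simp [hgf]

theorem apply_oddPart_of_commute {g : Module.End K V} (hgf : ∀ y, g (f y) = f (g y)) :
    g (oddPart f x) = oddPart f (g x) := by
  simp [hgf]

end Module.End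

open Module.End in
theorem LieHom.lie_evenPart_eq_zero {K L : Type*} [Field K] [LieRing L] [LieAlgebra K L]
    (τ : L →ₗ⁅K⁆ L) {ζ H : L} (hζH : ⁅ζ, H⁆ = 0) (hH : τ H = H) :
    ⁅evenPart (τ : Module.End K L) ζ, H⁆ = 0 := by
  have hτζH : ⁅τ ζ, H⁆ = 0 := by rw [← hH, ← LieHom.map_lie, hζH, map_zero]
  simp [add_lie, hζH, hτζH]

open Module.End in
theorem maximal_abelian_splits_under_commuting_involution_general
    {g : Type*} [LieRing g] [LieAlgebra ℝ g]
    (σ τ : g →ₗ⁅ℝ⁆ g)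
    (hτ : ∀ x, τ (τ x) = x)
    (hcomm : ∀ x, σ (τ x) = τ (σ x))
    (p pPlus pMinus : Submodule ℝ g)
    (hp : ∀ x, x ∈ p ↔ σ x = -x)
    (hpPlus : ∀ x, x ∈ pPlus ↔ (σ x = -x ∧ τ x = x))
    (hpMinus : ∀ x, x ∈ pMinus ↔ (σ x = -x ∧ τ x = -x))
    (aPlus a : Submodule ℝ g)
    (haPlus_le : aPlus ≤ pPlus)
    (haPlus_ab : ∀ x ∈ aPlus, ∀ y ∈ aPlus, ⁅x, y⁆ = 0)
    (haPlus_max : ∀ b : Submodule ℝ g, b ≤ pPlus →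
      (∀ x ∈ b, ∀ y ∈ b, ⁅x, y⁆ = 0) → aPlus ≤ b → b = aPlus)
    (ha_le : a ≤ p)
    (ha_ab : ∀ x ∈ a, ∀ y ∈ a, ⁅x, y⁆ = 0)
    (haPlus_a : aPlus ≤ a) :
    a = aPlus ⊔ (a ⊓ pMinus) ∧ ∀ x ∈ a, τ x ∈ a := by
  set s : Module.End ℝ g := σ.toLinearMap
  set t : Module.End ℝ g := τ.toLinearMap
  have h_parts : ∀ ζ ∈ a, evenPart t ζ ∈ aPlus ∧ oddPart t ζ ∈ a ⊓ pMinus := by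
    intro ζ hζ
    have hsζ : s ζ = -ζ := (hp ζ).mp (ha_le hζ)
    have hst : ∀ y, s (t y) = t (s y) := hcomm
    have h_even : evenPart t ζ ∈ aPlus := by
      refine IsAbelianSubspace.mem_of_maximal haPlus_ab haPlus_le haPlus_max
        ((hpPlus _).mpr ⟨?_, apply_evenPart ζ hτ⟩) fun H hH =>
          τ.lie_evenPart_eq_zero (ha_ab ζ hζ H (haPlus_a hH)) ((hpPlus H).mp (haPlus_le hH)).2
      show s (evenPart t ζ) = _
      rw [apply_evenPart_of_commute ζ hst, hsζ, map_neg]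
    have h_odd : oddPart t ζ = ζ - evenPart t ζ := eq_sub_of_add_eq' (evenPart_add_oddPart t ζ)
    refine ⟨h_even, h_odd ▸ a.sub_mem hζ (haPlus_a h_even),
      (hpMinus _).mpr ⟨?_, apply_oddPart ζ hτ⟩⟩
    show s (oddPart t ζ) = _
    rw [apply_oddPart_of_commute ζ hst, hsζ, map_neg]
  refine ⟨le_antisymm (fun ζ hζ => ?_) (sup_le haPlus_a inf_le_left), fun ζ hζ => ?_⟩
  all_goals obtain ⟨h_even, h_odd⟩ := h_parts ζ hζ
  · rw [← evenPart_add_oddPart t ζ]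
    exact add_mem (Submodule.mem_sup_left h_even) (Submodule.mem_sup_right h_odd)
  · show t ζ ∈ a
    rw [← evenPart_sub_oddPart t ζ]
    exact a.sub_mem (haPlus_a h_even) h_odd.1

/-- For commuting involutive automorphisms `σ, τ` of a Lie algebra, a maximal abelian
subspace `𝔞` of `𝔭` containing a maximal abelian subspace `𝔞₊` of `𝔭₊` splits as
`𝔞 = 𝔞₊ ⊔ (𝔞 ⊓ 𝔭₋)`; in particular `𝔞` is `τ`-invariant. -/
theorem maximal_abelian_splits_under_commuting_involution
    {g : Type*} [LieRing g] [LieAlgebra ℝ g]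
    (σ τ : g →ₗ⁅ℝ⁆ g)
    (hσ : ∀ x, σ (σ x) = x) (hτ : ∀ x, τ (τ x) = x)
    (hcomm : ∀ x, σ (τ x) = τ (σ x))
    (p pPlus pMinus : Submodule ℝ g)
    (hp : ∀ x, x ∈ p ↔ σ x = -x)
    (hpPlus : ∀ x, x ∈ pPlus ↔ (σ x = -x ∧ τ x = x))
    (hpMinus : ∀ x, x ∈ pMinus ↔ (σ x = -x ∧ τ x = -x))
    (aPlus a : Submodule ℝ g)
    (haPlus_le : aPlus ≤ pPlus)
    (haPlus_ab : ∀ x ∈ aPlus, ∀ y ∈ aPlus, ⁅x, y⁆ = 0)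
    (haPlus_max : ∀ b : Submodule ℝ g, b ≤ pPlus →
      (∀ x ∈ b, ∀ y ∈ b, ⁅x, y⁆ = 0) → aPlus ≤ b → b = aPlus)
    (ha_le : a ≤ p)
    (ha_ab : ∀ x ∈ a, ∀ y ∈ a, ⁅x, y⁆ = 0)
    (ha_max : ∀ b : Submodule ℝ g, b ≤ p →
      (∀ x ∈ b, ∀ y ∈ b, ⁅x, y⁆ = 0) → a ≤ b → b = a)
    (haPlus_a : aPlus ≤ a) :
    a = aPlus ⊔ (a ⊓ pMinus) ∧ ∀ x ∈ a, τ x ∈ a :=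
  maximal_abelian_splits_under_commuting_involution_general σ τ hτ hcomm p pPlus pMinus hp hpPlus
    hpMinus aPlus a haPlus_le haPlus_ab haPlus_max ha_le ha_ab haPlus_a
end

section
/- Let 𝔥 be a finite-dimensional real vector space of commuting skew-symmetric endomorphisms of a real inner product space V. Then V decomposes orthogonally as V = V₀ ⊕ V₁ ⊕ ⋯ ⊕ V_k where every H ∈ 𝔥 acts as zero on V₀, each V_j (j ≥ 1) is 2-dimensional, and there exist linear forms α_j on 𝔥 and complex structures J_j on V_j such that H acts on V_j as α_j(H)·J_j. -/
/-!
For `H₀ ∈ 𝔥` the operators `K ∘ H₀` (`K ∈ 𝔥`) are symmetric and commute, so on any invariant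
subspace where `H₀` does not vanish they have a joint eigenvector `u` with `H₀ u ≠ 0`. The plane
`span {u, H₀ u}` is then invariant, `H₀² = c` on it with `c = -‖H₀ u‖² / ‖u‖² < 0`, and every
`K ∈ 𝔥` acts on it as a multiple of `H₀`; so `J = H₀ / √(-c)` is a complex structure there.
Orthogonal complements of invariant subspaces are invariant, so a family of pairwise orthogonal
such planes whose complement has minimal dimension leaves a complement on which `𝔥` vanishes.
-/

open Module Submodule
open scoped InnerProductSpace

theorem exists_joint_eigenvector_apply_ne_zero {𝕜 E F ι : Type*} [RCLike 𝕜]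
    [NormedAddCommGroup E] [InnerProductSpace 𝕜 E] [FiniteDimensional 𝕜 E]
    [AddCommGroup F] [Module 𝕜 F] {T : ι → E →ₗ[𝕜] E} (hT : ∀ i, (T i).IsSymmetric)
    (hC : Pairwise fun i j => Commute (T i) (T j)) {L : E →ₗ[𝕜] F} (hL : L ≠ 0) :
    ∃ (χ : ι → 𝕜) (x : E), (∀ i, T i x = χ i • x) ∧ L x ≠ 0 := by
  by_contra! h
  refine hL (LinearMap.ker_eq_top.mp (top_le_iff.mp ?_))
  rw [← LinearMap.IsSymmetric.iSup_iInf_eq_top_of_commute hT hC]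
  exact iSup_le fun χ x hx =>
    h χ x fun i => Module.End.mem_eigenspace_iff.mp ((mem_iInf _).mp hx i)

theorem exists_linearMap_eq_smul_of_forall_mem_span_singleton {K M N : Type*} [Field K]
    [AddCommGroup M] [Module K M] [AddCommGroup N] [Module K N] (f : M →ₗ[K] N) {u : N}
    (hu : u ≠ 0) (hf : ∀ m, f m ∈ K ∙ u) : ∃ φ : M →ₗ[K] K, ∀ m, f m = φ m • u := by
  let e := LinearEquiv.toSpanNonzeroSingleton K N u hu
  refine ⟨e.symm.toLinearMap ∘ₗ f.codRestrict _ hf, fun m => ?_⟩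
  have := congrArg Subtype.val (e.apply_symm_apply ⟨f m, hf m⟩)
  rw [LinearEquiv.toSpanNonzeroSingleton_apply] at this
  exact this.symm

section Skew

variable {V : Type*} [NormedAddCommGroup V] [InnerProductSpace ℝ V] {H : V →ₗ[ℝ] V}

theorem inner_apply_self_eq_zero_of_skew (hH : ∀ v w, ⟪H v, w⟫_ℝ = -⟪v, H w⟫_ℝ) (u : V) :
    ⟪H u, u⟫_ℝ = 0 := by
  linarith [hH u u, real_inner_comm u (H u)]

theorem finrank_span_pair_apply_of_skew (hH : ∀ v w, ⟪H v, w⟫_ℝ = -⟪v, H w⟫_ℝ) {u : V}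
    (hu : H u ≠ 0) : finrank ℝ (span ℝ {u, H u}) = 2 := by
  have hu₀ : u ≠ 0 := by rintro rfl; simp at hu
  have hli : LinearIndependent ℝ ![u, H u] :=
    linearIndependent_of_ne_zero_of_inner_eq_zero (fun i => by fin_cases i <;> simpa)
      fun i j hij => by
        fin_cases i <;> fin_cases j <;> simp_all [inner_apply_self_eq_zero_of_skew hH,
          real_inner_comm (H u) u]
  rw [← Matrix.range_cons_cons_empty u (H u) ![], finrank_span_eq_card hli, Fintype.card_fin]

theorem apply_mem_orthogonal_of_skew (hH : ∀ v w, ⟪H v, w⟫_ℝ = -⟪v, H w⟫_ℝ)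
    {W : Submodule ℝ V} (hW : ∀ w ∈ W, H w ∈ W) {v : V} (hv : v ∈ Wᗮ) : H v ∈ Wᗮ := by
  intro w hw
  rw [← neg_eq_zero, ← hH, hv (H w) (hW w hw)]

end Skew

section RotationPlane

variable {V : Type*} [NormedAddCommGroup V] [InnerProductSpace ℝ V]
  {𝔥 : Submodule ℝ (V →ₗ[ℝ] V)}

def IsRotationPlane (𝔥 : Submodule ℝ (V →ₗ[ℝ] V)) (W : Submodule ℝ V) : Prop :=
  finrank ℝ W = 2 ∧ ∃ (α : 𝔥 →ₗ[ℝ] ℝ) (J : V →ₗ[ℝ] V), (∀ v ∈ W, J v ∈ W) ∧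
    (∀ v ∈ W, J (J v) = -v) ∧ ∀ H : 𝔥, ∀ v ∈ W, (H : V →ₗ[ℝ] V) v = α H • J v

theorem IsRotationPlane.apply_mem {W : Submodule ℝ V} (hW : IsRotationPlane 𝔥 W)
    {H : V →ₗ[ℝ] V} (hH : H ∈ 𝔥) {v : V} (hv : v ∈ W) : H v ∈ W := by
  obtain ⟨-, α, J, hJ, -, hact⟩ := hW
  rw [show H v = _ from hact ⟨H, hH⟩ v hv]
  exact W.smul_mem _ (hJ v hv)

theorem isRotationPlane_span_pair (hskew : ∀ H ∈ 𝔥, ∀ v w : V, ⟪H v, w⟫_ℝ = -⟪v, H w⟫_ℝ)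
    (hcomm : ∀ H ∈ 𝔥, ∀ K ∈ 𝔥, ∀ v, H (K v) = K (H v)) {H₀ : V →ₗ[ℝ] V} (hH₀ : H₀ ∈ 𝔥)
    {u : V} (hu : H₀ u ≠ 0) (φ : 𝔥 →ₗ[ℝ] ℝ) (hφ : ∀ K : 𝔥, (K : V →ₗ[ℝ] V) (H₀ u) = φ K • u) :
    IsRotationPlane 𝔥 (span ℝ {u, H₀ u}) := by
  set W := span ℝ {u, H₀ u}
  set c := φ ⟨H₀, hH₀⟩
  have hc : H₀ (H₀ u) = c • u := hφ ⟨H₀, hH₀⟩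
  have hc_neg : c < 0 := by
    have h := hskew H₀ hH₀ (H₀ u) u
    rw [hc, real_inner_smul_left, real_inner_self_eq_norm_sq, real_inner_self_eq_norm_sq] at h
    have : 0 < ‖H₀ u‖ := norm_pos_iff.mpr hu
    nlinarith [sq_nonneg ‖u‖]
  have eqOn_span {A B : V →ₗ[ℝ] V} (hu : A u = B u) (hHu : A (H₀ u) = B (H₀ u)) :
      ∀ v ∈ W, A v = B v :=
    fun _ hv => LinearMap.eqOn_span' (by rintro x (rfl | rfl) <;> assumption) hv
  have hsq : ∀ v ∈ W, H₀ (H₀ v) = c • v :=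
    eqOn_span (A := H₀ ∘ₗ H₀) (B := c • LinearMap.id) hc (by simp [hc])
  -- `c • K u = K (H₀ (H₀ u)) = H₀ (K (H₀ u)) = φ K • H₀ u`
  have hact : ∀ K : 𝔥, ∀ v ∈ W, (K : V →ₗ[ℝ] V) v = (φ K / c) • H₀ v := by
    intro K
    refine eqOn_span (B := (φ K / c) • H₀) ?_ ?_
    · have h := congrArg (K : V →ₗ[ℝ] V) hc
      rw [hcomm _ K.2 H₀ hH₀, hφ, map_smul, map_smul] at h
      rw [LinearMap.smul_apply, div_eq_inv_mul, ← smul_smul, h, smul_smul,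
        inv_mul_cancel₀ hc_neg.ne, one_smul]
    · simp only [LinearMap.smul_apply]
      rw [hφ, hc, smul_smul, div_mul_cancel₀ _ hc_neg.ne]
  have hW : ∀ v ∈ W, H₀ v ∈ W := by
    refine fun v hv => (span_le (p := W.comap H₀)).mpr ?_ hv
    rintro x (rfl | rfl)
    · exact subset_span (by simp)
    · simpa [hc] using W.smul_mem c (subset_span (by simp))
  set r := √(-c)
  have hr : r * r = -c := Real.mul_self_sqrt (by linarith)
  have hr₀ : r ≠ 0 := (Real.sqrt_pos.mpr (neg_pos.mpr hc_neg)).ne'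
  refine ⟨finrank_span_pair_apply_of_skew (hskew H₀ hH₀) hu, (r / c) • φ, r⁻¹ • H₀,
    fun v hv => W.smul_mem _ (hW v hv), fun v hv => ?_, fun K v hv => ?_⟩
  · rw [LinearMap.smul_apply, LinearMap.smul_apply, map_smul, hsq v hv, smul_smul, smul_smul,
      show r⁻¹ * r⁻¹ * c = -1 by field_simp; linarith, neg_one_smul]
  · rw [hact K v hv, LinearMap.smul_apply, LinearMap.smul_apply, smul_smul, smul_eq_mul]
    congr 1
    field_simp

theorem exists_isRotationPlane_le [FiniteDimensional ℝ V]
    (hskew : ∀ H ∈ 𝔥, ∀ v w : V, ⟪H v, w⟫_ℝ = -⟪v, H w⟫_ℝ)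
    (hcomm : ∀ H ∈ 𝔥, ∀ K ∈ 𝔥, ∀ v, H (K v) = K (H v)) {U : Submodule ℝ V}
    (hU : ∀ H ∈ 𝔥, ∀ v ∈ U, H v ∈ U) {H₀ : V →ₗ[ℝ] V} (hH₀ : H₀ ∈ 𝔥) {v₀ : V} (hv₀ : v₀ ∈ U)
    (hne : H₀ v₀ ≠ 0) : ∃ W ≤ U, IsRotationPlane 𝔥 W := by
  let T : 𝔥 → U →ₗ[ℝ] U := fun K =>
    ((K : V →ₗ[ℝ] V) ∘ₗ H₀).restrict fun v hv => hU K K.2 _ (hU H₀ hH₀ v hv)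
  have hT : ∀ K, (T K).IsSymmetric := fun K x y => by
    simp only [T, coe_inner, LinearMap.coe_restrict_apply, LinearMap.comp_apply]
    rw [hskew _ K.2, hskew H₀ hH₀, neg_neg, hcomm H₀ hH₀ _ K.2]
  have hC : Pairwise fun K K' => Commute (T K) (T K') := fun K K' _ => by
    ext x
    simp only [T, Module.End.mul_apply, LinearMap.coe_restrict_apply, LinearMap.comp_apply]
    rw [hcomm H₀ hH₀ _ K'.2, hcomm H₀ hH₀ _ K.2, hcomm _ K.2 _ K'.2]
  have hL : H₀ ∘ₗ U.subtype ≠ 0 := fun h => hne (by simpa using LinearMap.congr_fun h ⟨v₀, hv₀⟩)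
  obtain ⟨χ, x, hx, hx₀⟩ := exists_joint_eigenvector_apply_ne_zero hT hC hL
  have hχ : ∀ K : 𝔥, (K : V →ₗ[ℝ] V) (H₀ x) = χ K • (x : V) := fun K =>
    congrArg Subtype.val (hx K)
  obtain ⟨φ, hφ⟩ := exists_linearMap_eq_smul_of_forall_mem_span_singleton
    (LinearMap.applyₗ (H₀ x) ∘ₗ 𝔥.subtype) (u := x) (fun h => hx₀ (by simp [h]))
    fun K => mem_span_singleton.mpr ⟨χ K, (hχ K).symm⟩
  refine ⟨span ℝ {(x : V), H₀ x}, span_le.mpr ?_,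
    isRotationPlane_span_pair hskew hcomm hH₀ hx₀ φ hφ⟩
  rintro y (rfl | rfl)
  exacts [x.2, hU H₀ hH₀ x x.2]

theorem exists_finset_isRotationPlane [FiniteDimensional ℝ V]
    (hskew : ∀ H ∈ 𝔥, ∀ v w : V, ⟪H v, w⟫_ℝ = -⟪v, H w⟫_ℝ)
    (hcomm : ∀ H ∈ 𝔥, ∀ K ∈ 𝔥, ∀ v, H (K v) = K (H v)) :
    ∃ S : Finset (Submodule ℝ V), (∀ W ∈ S, IsRotationPlane 𝔥 W) ∧
      (S : Set (Submodule ℝ V)).Pairwise (· ⟂ ·) ∧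
      ∀ H ∈ 𝔥, ∀ v ∈ (sSup (S : Set (Submodule ℝ V)))ᗮ, H v = 0 := by
  classical
  have hex : ∃ m, ∃ S : Finset (Submodule ℝ V), (∀ W ∈ S, IsRotationPlane 𝔥 W) ∧
      (S : Set (Submodule ℝ V)).Pairwise (· ⟂ ·) ∧
      finrank ℝ (sSup (S : Set (Submodule ℝ V)))ᗮ = m :=
    ⟨_, ∅, by simp, by simp, rfl⟩
  obtain ⟨S, hrot, horth, hm⟩ := Nat.find_spec hex
  refine ⟨S, hrot, horth, ?_⟩
  set P := sSup (S : Set (Submodule ℝ V))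
  by_contra! ⟨H₀, hH₀, v₀, hv₀, hne⟩
  have hP : ∀ H ∈ 𝔥, ∀ w ∈ P, H w ∈ P := fun H hH =>
    (sSup_le fun W hW w hw => (le_sSup hW : W ≤ P) ((hrot W hW).apply_mem hH hw) :
      P ≤ P.comap H)
  obtain ⟨W, hWP, hW⟩ := exists_isRotationPlane_le hskew hcomm
    (fun H hH _ => apply_mem_orthogonal_of_skew (hskew H hH) (hP H hH)) hH₀ hv₀ hne
  have hlt : (W ⊔ P)ᗮ < Pᗮ := by
    refine lt_of_le_of_ne (orthogonal_le le_sup_right) fun h => ?_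
    have hW₀ : W = ⊥ := (orthogonal_disjoint W).eq_bot_of_le
      (hWP.trans (h ▸ orthogonal_le le_sup_left))
    have h2 := hW.1
    rw [hW₀, finrank_bot] at h2
    exact absurd h2 (by norm_num)
  refine (Nat.find_min hex (hm ▸ finrank_lt_finrank_of_lt hlt)) ⟨insert W S, ?_, ?_, ?_⟩
  · exact Finset.forall_mem_insert _ _ _ |>.mpr ⟨hW, hrot⟩
  · have hWS : ∀ W' ∈ S, W ⟂ W' := fun W' hW' =>
      isOrtho_iff_le.mpr (hWP.trans (orthogonal_le (le_sSup hW')))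
    rw [Finset.coe_insert, Set.pairwise_insert]
    exact ⟨horth, fun W' hW' _ => ⟨hWS W' hW', (hWS W' hW').symm⟩⟩
  · rw [Finset.coe_insert, sSup_insert]

end RotationPlane

/-- Simultaneous block diagonalization of a commuting family of skew-symmetric
endomorphisms: `V` splits orthogonally into a common kernel `V₀` and 2-dimensional
invariant planes on which each `H ∈ 𝔥` acts as `α j H • J j` for a linear form `α j`
and a complex structure `J j`. -/
theorem simultaneous_block_diagonalization_skew
    {V : Type*} [NormedAddCommGroup V] [InnerProductSpace ℝ V] [FiniteDimensional ℝ V]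
    (𝔥 : Submodule ℝ (V →ₗ[ℝ] V))
    (hskew : ∀ H ∈ 𝔥, ∀ v w : V, (inner ℝ (H v) w : ℝ) = - inner ℝ v (H w))
    (hcomm : ∀ H ∈ 𝔥, ∀ K ∈ 𝔥, ∀ v, H (K v) = K (H v)) :
    ∃ (k : ℕ) (V₀ : Submodule ℝ V) (W : Fin k → Submodule ℝ V)
      (α : Fin k → (𝔥 →ₗ[ℝ] ℝ)) (J : Fin k → (V →ₗ[ℝ] V)),
      (∀ v ∈ V₀, ∀ i : Fin k, ∀ w ∈ W i, (inner ℝ v w : ℝ) = 0) ∧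
      (∀ i j : Fin k, i ≠ j → ∀ v ∈ W i, ∀ w ∈ W j, (inner ℝ v w : ℝ) = 0) ∧
      (V₀ ⊔ (⨆ i, W i) = ⊤) ∧
      (∀ H ∈ 𝔥, ∀ v ∈ V₀, H v = 0) ∧
      (∀ i, Module.finrank ℝ (W i) = 2) ∧
      (∀ i, ∀ v ∈ W i, J i v ∈ W i) ∧
      (∀ i, ∀ v ∈ W i, J i (J i v) = -v) ∧
      (∀ i, ∀ H : 𝔥, ∀ v ∈ W i, (H : V →ₗ[ℝ] V) v = α i H • J i v) := by
  obtain ⟨S, hrot, horth, hker⟩ := exists_finset_isRotationPlane hskew hcomm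
  choose! α J hJ hJJ hact using fun W hW => (hrot W hW).2
  let e := S.equivFin.symm
  refine ⟨S.card, (sSup (S : Set (Submodule ℝ V)))ᗮ, fun i => e i, fun i => α (e i),
    fun i => J (e i), fun v hv i w hw => inner_left_of_mem_orthogonal (le_sSup (e i).2 hw) hv,
    fun i j hij v hv w hw => horth (e i).2 (e j).2 (fun h => hij (e.injective (Subtype.ext h)))
      |>.inner_eq hv hw, ?_, hker, fun i => (hrot _ (e i).2).1, fun i => hJ _ (e i).2,
    fun i => hJJ _ (e i).2, fun i => hact _ (e i).2⟩
  have hsup : ⨆ i, (e i : Submodule ℝ V) = sSup ↑S :=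
    (e.iSup_comp (g := fun W : S => (W : Submodule ℝ V))).trans (sSup_eq_iSup' _).symm
  rw [hsup, sup_comm, sup_orthogonal_of_hasOrthogonalProjection]
end

section
/- Let a₁, …, a_k be reals and define the sequence of vectors v_ℓ = (a₁^{3^ℓ}, …, a_k^{3^ℓ}) ∈ ℝ^k for ℓ ≥ 0. If 0 < |a₁| < ⋯ < |a_k|, then the span of {v_ℓ : ℓ ≥ 0} is all of ℝ^k. -/
/-!
A linear functional `w` vanishing on every `v_ℓ` must be zero. Otherwise let `m` be the index
of largest `|a m|` with `w m ≠ 0`; dividing `∑ j, w j * a j ^ n` by `a m ^ n` gives a sum whose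
terms with `|a j| < |a m|` die out as `n → ∞`, so it tends to `w m ≠ 0`, yet it is identically zero.
-/

open Filter Finset Topology Matrix

theorem span_eq_top_of_forall_dotProduct_eq_zero {K ι : Type*} [Field K] [Fintype ι]
    {S : Set (ι → K)} (h : ∀ w : ι → K, (∀ x ∈ S, w ⬝ᵥ x = 0) → w = 0) :
    Submodule.span K S = ⊤ := by
  classical
  rw [← Submodule.dualAnnihilator_eq_bot_iff, eq_bot_iff]
  intro f hf
  set w : ι → K := fun i => f fun j => if i = j then 1 else 0
  have hfw : ∀ x, f x = w ⬝ᵥ x := fun x => by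
    rw [LinearMap.pi_apply_eq_sum_univ]
    simp only [smul_eq_mul, dotProduct, mul_comm, w]
  have hw : w = 0 := h w fun x hx => by
    rw [← hfw]
    exact (Submodule.mem_dualAnnihilator f).1 hf x (Submodule.subset_span hx)
  rw [Submodule.mem_bot]
  ext x
  simp [hfw, hw]

theorem eq_zero_of_forall_sum_mul_pow_eq_zero {ι : Type*} [Fintype ι] {a : ι → ℝ}
    (ha0 : ∀ j, a j ≠ 0) (hinj : Function.Injective fun j => |a j|) {n : ℕ → ℕ}
    (hn : Tendsto n atTop atTop) {w : ι → ℝ} (hw : ∀ ℓ, ∑ j, w j * a j ^ n ℓ = 0) :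
    w = 0 := by
  classical
  by_contra hw0
  obtain ⟨m, hm, hmax⟩ := (univ.filter fun j => w j ≠ 0).exists_max_image (fun j => |a j|) <| by
    obtain ⟨j, hj⟩ := Function.ne_iff.1 hw0
    exact ⟨j, by simpa using hj⟩
  have hwm : w m ≠ 0 := (mem_filter.1 hm).2
  have hterm : ∀ j, Tendsto (fun ℓ => w j * (a j / a m) ^ n ℓ) atTop
      (𝓝 (if j = m then w m else 0)) := by
    intro j
    by_cases hjm : j = m
    · subst hjm
      simp [div_self (ha0 j)]
    by_cases hwj : w j = 0
    · simp [hwj, hjm]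
    have hlt : |a j / a m| < 1 := by
      rw [abs_div, div_lt_one (abs_pos.2 (ha0 m))]
      exact (hmax j (by simpa using hwj)).lt_of_ne (hinj.ne hjm)
    simpa [hjm] using ((tendsto_pow_atTop_nhds_zero_of_abs_lt_one hlt).comp hn).const_mul (w j)
  have hsum : Tendsto (fun ℓ => ∑ j, w j * (a j / a m) ^ n ℓ) atTop (𝓝 (w m)) := by
    simpa using tendsto_finsetSum univ fun j _ => hterm j
  have hzero : ∀ ℓ, ∑ j, w j * (a j / a m) ^ n ℓ = 0 := fun ℓ => by
    simp only [div_pow, ← mul_div_assoc, ← sum_div, hw ℓ, zero_div]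
  exact hwm (tendsto_nhds_unique hsum (by simp [hzero]))

/-- Generalized Vandermonde: if `0 < |a 0| < ⋯ < |a (k-1)|`, then the vectors
`(a j ^ (3 ^ ℓ))_j`, `ℓ ≥ 0`, span all of `ℝ^k`. -/
theorem span_of_odd_power_vectors
    {k : ℕ} (a : Fin k → ℝ)
    (ha0 : ∀ j, 0 < |a j|)
    (hmono : StrictMono fun j => |a j|) :
    Submodule.span ℝ {x : Fin k → ℝ | ∃ ℓ : ℕ, x = fun j => a j ^ (3 ^ ℓ)} = ⊤ := by
  refine span_eq_top_of_forall_dotProduct_eq_zero fun w hw => ?_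
  exact eq_zero_of_forall_sum_mul_pow_eq_zero (fun j => abs_pos.1 (ha0 j)) hmono.injective
    (tendsto_pow_atTop_atTop_of_one_lt (by norm_num : 1 < 3)) fun ℓ => hw _ ⟨ℓ, rfl⟩
end
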